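/- Let d ∈ (−1, 1), set τ := d + 3 + 2√(2 + 2d), and take the trapezoid parameters ℓ := 1 + d, α := arctan(2(1 − d)), θ := arctan(2τ) (these satisfy tan θ > 2ℓ + tan α). Then F_{ℓ,α,θ}⁴(x) = x + 1 for all x ∈ ℝ; in particular ρ(F_{ℓ,α,θ}) = 1/4 and every point of the circle is periodic with period 4. This is the degenerate Arnol'd 'tongue' of rotation number 1/4 in the (d, τ) parameter plane. -/
import Mathlib


open Real Filter Set

/-- Rotation number of a lift `T` of a circle homeomorphism,
defined as the limit of `T^[n] 0 / n` (which exists and is independent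
of the base point for lifts of orientation-preserving circle homeos). -/
noncomputable def rotationNumber (T : ℝ → ℝ) : ℝ :=
  limUnder atTop (fun n : ℕ => T^[n] 0 / (n : ℝ))

/-- The expansion factor `Λ = sin(θ+α)/sin(θ−α)`. -/
noncomputable def Lam (α θ : ℝ) : ℝ := Real.sin (θ + α) / Real.sin (θ - α)

/-- The break point of increase `a₀ = (tan θ − 2ℓ)/(2 tan θ)`. -/
noncomputable def brk0 (ℓ θ : ℝ) : ℝ := (Real.tan θ - 2 * ℓ) / (2 * Real.tan θ)

/-- The break point of decrease `a₁ = −(2ℓ + tan α)/(2 tan θ)`. -/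
noncomputable def brk1 (ℓ α θ : ℝ) : ℝ := -(2 * ℓ + Real.tan α) / (2 * Real.tan θ)

/-- The two-piece definition of the lift on the fundamental interval `[a₁, a₁+1)`. -/
noncomputable def Ftrap0 (ℓ α θ x : ℝ) : ℝ :=
  if x ≤ brk0 ℓ θ then -brk1 ℓ α θ + (Lam α θ)⁻¹ * (x - brk1 ℓ α θ)
  else 1 - brk0 ℓ θ + Lam α θ * (x - brk0 ℓ θ)

/-- The lift `F_{ℓ,α,θ} : ℝ → ℝ` of the Poincaré map of the internal-wave
billiard in a rectangular trapezoid: it is given by the two-piece formula on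
`[a₁, a₁+1)` and extended by `F(x+k) = F(x)+k` for `k ∈ ℤ`. -/
noncomputable def Ftrap (ℓ α θ x : ℝ) : ℝ :=
  Ftrap0 ℓ α θ (x - ⌊x - brk1 ℓ α θ⌋) + ⌊x - brk1 ℓ α θ⌋

private lemma frle {E1 E2 N D : ℝ} (hD : 0 < D) (hE : (E2 - E1) * D = N) (hN : 0 ≤ N) :
    E1 ≤ E2 := by
  have h := div_nonneg hN hD.le
  rw [← hE, mul_div_cancel_right₀ _ hD.ne'] at h
  linarith

private lemma frlt {E1 E2 N D : ℝ} (hD : 0 < D) (hE : (E2 - E1) * D = N) (hN : 0 < N) :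
    E1 < E2 := by
  have h := div_pos hN hD
  rw [← hE, mul_div_cancel_right₀ _ hD.ne'] at h
  linarith

private lemma stepL (ℓ α θ s : ℝ) (hs0 : 0 < s)
    (hΛ : Lam α θ = 2/s) (h1 : brk1 ℓ α θ = -2/(s+2)^2)
    (z : ℝ) (k : ℤ) (hf1 : (k:ℝ) ≤ z - brk1 ℓ α θ) (hf2 : z - brk1 ℓ α θ < (k:ℝ) + 1)
    (hb : z - (k:ℝ) ≤ brk0 ℓ θ) :
    Ftrap ℓ α θ z = s/2*(z - (k:ℝ)) + 1/(s+2) + (k:ℝ) := by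
  have hs2' : (0:ℝ) < s + 2 := by linarith
  have hfl : ⌊z - brk1 ℓ α θ⌋ = k := Int.floor_eq_iff.mpr ⟨hf1, hf2⟩
  unfold Ftrap
  rw [hfl]
  unfold Ftrap0
  rw [if_pos hb, hΛ, h1]
  field_simp
  ring

private lemma stepR (ℓ α θ s : ℝ) (hs0 : 0 < s)
    (hΛ : Lam α θ = 2/s) (h0 : brk0 ℓ θ = (2*s+2)/(s+2)^2) (h1 : brk1 ℓ α θ = -2/(s+2)^2)
    (z : ℝ) (k : ℤ) (hf1 : (k:ℝ) ≤ z - brk1 ℓ α θ) (hf2 : z - brk1 ℓ α θ < (k:ℝ) + 1)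
    (hb : brk0 ℓ θ ≤ z - (k:ℝ)) :
    Ftrap ℓ α θ z = 2/s*(z - (k:ℝ)) + (s^2-2)/(s*(s+2)) + (k:ℝ) := by
  have hs2' : (0:ℝ) < s + 2 := by linarith
  have hfl : ⌊z - brk1 ℓ α θ⌋ = k := Int.floor_eq_iff.mpr ⟨hf1, hf2⟩
  unfold Ftrap
  rw [hfl]
  unfold Ftrap0
  by_cases hc : z - (k:ℝ) ≤ brk0 ℓ θ
  · have hEq : z - (k:ℝ) = brk0 ℓ θ := le_antisymm hc hb
    rw [if_pos hc, hEq, hΛ, h0, h1]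
    field_simp
    ring
  · rw [if_neg hc, hΛ, h0]
    field_simp
    ring

set_option maxHeartbeats 2000000 in
private lemma four_step (ℓ α θ s x : ℝ) (hs0 : 0 < s) (hs2 : s < 2)
    (hΛ : Lam α θ = 2/s) (h0 : brk0 ℓ θ = (2*s+2)/(s+2)^2) (h1 : brk1 ℓ α θ = -2/(s+2)^2)
    (hx1 : brk1 ℓ α θ ≤ x) (hx2 : x < brk1 ℓ α θ + 1) :
    (Ftrap ℓ α θ)^[4] x = x + 1 := by
  have hs2' : (0:ℝ) < s + 2 := by linarith
  have hA : (0:ℝ) < (s+2)^2 := by positivity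
  rw [h1] at hx1 hx2
  have hg1 : -2 ≤ x*(s+2)^2 := by rw [div_le_iff₀ hA] at hx1; linarith
  have hg2 : x*(s+2)^2 < s^2+4*s+2 := by
    have h' : x < (s^2+4*s+2)/(s+2)^2 := by
      rw [show (s^2+4*s+2)/(s+2)^2 = -2/(s+2)^2 + 1 by field_simp; ring]; exact hx2
    rw [lt_div_iff₀ hA] at h'; linarith
  rcases lt_or_ge x (2/(s+2)^2) with hC | hC
  · -- Case 1 : a₁ ≤ x < -a₁
    have hcu : x*(s+2)^2 < 2 := by rw [lt_div_iff₀ hA] at hC; linarith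
    have c01 : (((0:ℤ)):ℝ) ≤ (x) - brk1 ℓ α θ := by
      rw [h1]; push_cast
      exact frle (D := (4*s^2*(s+2)^2)) (N := (4*s^2) * (x*(s+2)^2) + (8*s^2)) (by positivity) (by field_simp; ring) (by linarith [mul_le_mul_of_nonneg_left hg1 (by positivity : (0:ℝ) ≤ 4*s^2), hs0, pow_pos hs0 2, pow_pos hs0 3, pow_pos hs0 4])
    have c02 : (x) - brk1 ℓ α θ < (((0:ℤ)):ℝ) + 1 := by
      rw [h1]; push_cast
      exact frlt (D := (4*s^2*(s+2)^2)) (N := (-4*s^2) * (x*(s+2)^2) + (8*s^2 + 16*s^3 + 4*s^4)) (by positivity) (by field_simp; ring) (by linarith [mul_lt_mul_of_pos_left hcu (by positivity : (0:ℝ) < 4*s^2), hs0, pow_pos hs0 2, pow_pos hs0 3, pow_pos hs0 4])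
    have c03 : (x) - (((0:ℤ)):ℝ) ≤ brk0 ℓ θ := by
      rw [h0]; push_cast
      exact frle (D := (4*s^2*(s+2)^2)) (N := (-4*s^2) * (x*(s+2)^2) + (8*s^2 + 8*s^3)) (by positivity) (by field_simp; ring) (by linarith [mul_lt_mul_of_pos_left hcu (by positivity : (0:ℝ) < 4*s^2), hs0, pow_pos hs0 2, pow_pos hs0 3, pow_pos hs0 4])
    have e1 : Ftrap ℓ α θ (x) = s/2*x + 1/(s+2) := by
      rw [stepL ℓ α θ s hs0 hΛ h1 (x) 0 c01 c02 c03]; push_cast; field_simp; try ring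
    have c11 : (((0:ℤ)):ℝ) ≤ (s/2*x + 1/(s+2)) - brk1 ℓ α θ := by
      rw [h1]; push_cast
      exact frle (D := (4*s^2*(s+2)^2)) (N := (2*s^3) * (x*(s+2)^2) + (16*s^2 + 4*s^3)) (by positivity) (by field_simp; ring) (by linarith [mul_le_mul_of_nonneg_left hg1 (by positivity : (0:ℝ) ≤ 2*s^3), hs0, pow_pos hs0 2, pow_pos hs0 3, pow_pos hs0 4])
    have c12 : (s/2*x + 1/(s+2)) - brk1 ℓ α θ < (((0:ℤ)):ℝ) + 1 := by
      rw [h1]; push_cast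
      exact frlt (D := (4*s^2*(s+2)^2)) (N := (-2*s^3) * (x*(s+2)^2) + (12*s^3 + 4*s^4)) (by positivity) (by field_simp; ring) (by linarith [mul_lt_mul_of_pos_left hcu (by positivity : (0:ℝ) < 2*s^3), hs0, pow_pos hs0 2, pow_pos hs0 3, pow_pos hs0 4])
    have c13 : (s/2*x + 1/(s+2)) - (((0:ℤ)):ℝ) ≤ brk0 ℓ θ := by
      rw [h0]; push_cast
      exact frle (D := (4*s^2*(s+2)^2)) (N := (-2*s^3) * (x*(s+2)^2) + (4*s^3)) (by positivity) (by field_simp; ring) (by linarith [mul_lt_mul_of_pos_left hcu (by positivity : (0:ℝ) < 2*s^3), hs0, pow_pos hs0 2, pow_pos hs0 3, pow_pos hs0 4])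
    have e2 : Ftrap ℓ α θ (s/2*x + 1/(s+2)) = s^2/4*x + 1/2 := by
      rw [stepL ℓ α θ s hs0 hΛ h1 (s/2*x + 1/(s+2)) 0 c11 c12 c13]; push_cast; field_simp; try ring
    have c21 : (((0:ℤ)):ℝ) ≤ (s^2/4*x + 1/2) - brk1 ℓ α θ := by
      rw [h1]; push_cast
      exact frle (D := (4*s^2*(s+2)^2)) (N := (1*s^4) * (x*(s+2)^2) + (16*s^2 + 8*s^3 + 2*s^4)) (by positivity) (by field_simp; ring) (by linarith [mul_le_mul_of_nonneg_left hg1 (by positivity : (0:ℝ) ≤ 1*s^4), hs0, pow_pos hs0 2, pow_pos hs0 3, pow_pos hs0 4])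
    have c22 : (s^2/4*x + 1/2) - brk1 ℓ α θ < (((0:ℤ)):ℝ) + 1 := by
      rw [h1]; push_cast
      exact frlt (D := (4*s^2*(s+2)^2)) (N := (-1*s^4) * (x*(s+2)^2) + (8*s^3 + 2*s^4)) (by positivity) (by field_simp; ring) (by linarith [mul_lt_mul_of_pos_left hcu (by positivity : (0:ℝ) < 1*s^4), hs0, pow_pos hs0 2, pow_pos hs0 3, pow_pos hs0 4])
    have c23 : brk0 ℓ θ ≤ (s^2/4*x + 1/2) - (((0:ℤ)):ℝ) := by
      rw [h0]; push_cast
      exact frle (D := (4*s^2*(s+2)^2)) (N := (1*s^4) * (x*(s+2)^2) + (2*s^4)) (by positivity) (by field_simp; ring) (by linarith [mul_le_mul_of_nonneg_left hg1 (by positivity : (0:ℝ) ≤ 1*s^4), hs0, pow_pos hs0 2, pow_pos hs0 3, pow_pos hs0 4])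
    have e3 : Ftrap ℓ α θ (s^2/4*x + 1/2) = s/2*x + (s+1)/(s+2) := by
      rw [stepR ℓ α θ s hs0 hΛ h0 h1 (s^2/4*x + 1/2) 0 c21 c22 c23]; push_cast; field_simp; try ring
    have c31 : (((0:ℤ)):ℝ) ≤ (s/2*x + (s+1)/(s+2)) - brk1 ℓ α θ := by
      rw [h1]; push_cast
      exact frle (D := (4*s^2*(s+2)^2)) (N := (2*s^3) * (x*(s+2)^2) + (16*s^2 + 12*s^3 + 4*s^4)) (by positivity) (by field_simp; ring) (by linarith [mul_le_mul_of_nonneg_left hg1 (by positivity : (0:ℝ) ≤ 2*s^3), hs0, pow_pos hs0 2, pow_pos hs0 3, pow_pos hs0 4])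
    have c32 : (s/2*x + (s+1)/(s+2)) - brk1 ℓ α θ < (((0:ℤ)):ℝ) + 1 := by
      rw [h1]; push_cast
      exact frlt (D := (4*s^2*(s+2)^2)) (N := (-2*s^3) * (x*(s+2)^2) + (4*s^3)) (by positivity) (by field_simp; ring) (by linarith [mul_lt_mul_of_pos_left hcu (by positivity : (0:ℝ) < 2*s^3), hs0, pow_pos hs0 2, pow_pos hs0 3, pow_pos hs0 4])
    have c33 : brk0 ℓ θ ≤ (s/2*x + (s+1)/(s+2)) - (((0:ℤ)):ℝ) := by
      rw [h0]; push_cast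
      exact frle (D := (4*s^2*(s+2)^2)) (N := (2*s^3) * (x*(s+2)^2) + (4*s^3 + 4*s^4)) (by positivity) (by field_simp; ring) (by linarith [mul_le_mul_of_nonneg_left hg1 (by positivity : (0:ℝ) ≤ 2*s^3), hs0, pow_pos hs0 2, pow_pos hs0 3, pow_pos hs0 4])
    have e4 : Ftrap ℓ α θ (s/2*x + (s+1)/(s+2)) = x + 1 := by
      rw [stepR ℓ α θ s hs0 hΛ h0 h1 (s/2*x + (s+1)/(s+2)) 0 c31 c32 c33]; push_cast; field_simp; try ring
    simp only [Function.iterate_succ, Function.iterate_zero, Function.comp_apply, id_eq]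
    rw [e1, e2, e3, e4]
  · rcases lt_or_ge x ((2*s+2)/(s+2)^2) with hC2 | hC2
    · -- Case 2 : -a₁ ≤ x < a₀
      have hcl : 2 ≤ x*(s+2)^2 := by rw [div_le_iff₀ hA] at hC; linarith
      have hcu : x*(s+2)^2 < 2*s+2 := by rw [lt_div_iff₀ hA] at hC2; linarith
      have c01 : (((0:ℤ)):ℝ) ≤ (x) - brk1 ℓ α θ := by
        rw [h1]; push_cast
        exact frle (D := (4*s^2*(s+2)^2)) (N := (4*s^2) * (x*(s+2)^2) + (8*s^2)) (by positivity) (by field_simp; ring) (by linarith [mul_le_mul_of_nonneg_left hcl (by positivity : (0:ℝ) ≤ 4*s^2), hs0, pow_pos hs0 2, pow_pos hs0 3, pow_pos hs0 4])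
      have c02 : (x) - brk1 ℓ α θ < (((0:ℤ)):ℝ) + 1 := by
        rw [h1]; push_cast
        exact frlt (D := (4*s^2*(s+2)^2)) (N := (-4*s^2) * (x*(s+2)^2) + (8*s^2 + 16*s^3 + 4*s^4)) (by positivity) (by field_simp; ring) (by linarith [mul_lt_mul_of_pos_left hcu (by positivity : (0:ℝ) < 4*s^2), hs0, pow_pos hs0 2, pow_pos hs0 3, pow_pos hs0 4])
      have c03 : (x) - (((0:ℤ)):ℝ) ≤ brk0 ℓ θ := by
        rw [h0]; push_cast
        exact frle (D := (4*s^2*(s+2)^2)) (N := (-4*s^2) * (x*(s+2)^2) + (8*s^2 + 8*s^3)) (by positivity) (by field_simp; ring) (by linarith [mul_lt_mul_of_pos_left hcu (by positivity : (0:ℝ) < 4*s^2), hs0, pow_pos hs0 2, pow_pos hs0 3, pow_pos hs0 4])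
      have e1 : Ftrap ℓ α θ (x) = s/2*x + 1/(s+2) := by
        rw [stepL ℓ α θ s hs0 hΛ h1 (x) 0 c01 c02 c03]; push_cast; field_simp; try ring
      have c11 : (((0:ℤ)):ℝ) ≤ (s/2*x + 1/(s+2)) - brk1 ℓ α θ := by
        rw [h1]; push_cast
        exact frle (D := (4*s^2*(s+2)^2)) (N := (2*s^3) * (x*(s+2)^2) + (16*s^2 + 4*s^3)) (by positivity) (by field_simp; ring) (by linarith [mul_le_mul_of_nonneg_left hcl (by positivity : (0:ℝ) ≤ 2*s^3), hs0, pow_pos hs0 2, pow_pos hs0 3, pow_pos hs0 4])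
      have c12 : (s/2*x + 1/(s+2)) - brk1 ℓ α θ < (((0:ℤ)):ℝ) + 1 := by
        rw [h1]; push_cast
        exact frlt (D := (4*s^2*(s+2)^2)) (N := (-2*s^3) * (x*(s+2)^2) + (12*s^3 + 4*s^4)) (by positivity) (by field_simp; ring) (by linarith [mul_lt_mul_of_pos_left hcu (by positivity : (0:ℝ) < 2*s^3), hs0, pow_pos hs0 2, pow_pos hs0 3, pow_pos hs0 4])
      have c13 : brk0 ℓ θ ≤ (s/2*x + 1/(s+2)) - (((0:ℤ)):ℝ) := by
        rw [h0]; push_cast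
        exact frle (D := (4*s^2*(s+2)^2)) (N := (2*s^3) * (x*(s+2)^2) + (-4*s^3)) (by positivity) (by field_simp; ring) (by linarith [mul_le_mul_of_nonneg_left hcl (by positivity : (0:ℝ) ≤ 2*s^3), hs0, pow_pos hs0 2, pow_pos hs0 3, pow_pos hs0 4])
      have e2 : Ftrap ℓ α θ (s/2*x + 1/(s+2)) = x + s/(s+2) := by
        rw [stepR ℓ α θ s hs0 hΛ h0 h1 (s/2*x + 1/(s+2)) 0 c11 c12 c13]; push_cast; field_simp; try ring
      have c21 : (((0:ℤ)):ℝ) ≤ (x + s/(s+2)) - brk1 ℓ α θ := by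
        rw [h1]; push_cast
        exact frle (D := (4*s^2*(s+2)^2)) (N := (4*s^2) * (x*(s+2)^2) + (8*s^2 + 8*s^3 + 4*s^4)) (by positivity) (by field_simp; ring) (by linarith [mul_le_mul_of_nonneg_left hcl (by positivity : (0:ℝ) ≤ 4*s^2), hs0, pow_pos hs0 2, pow_pos hs0 3, pow_pos hs0 4])
      have c22 : (x + s/(s+2)) - brk1 ℓ α θ < (((0:ℤ)):ℝ) + 1 := by
        rw [h1]; push_cast
        exact frlt (D := (4*s^2*(s+2)^2)) (N := (-4*s^2) * (x*(s+2)^2) + (8*s^2 + 8*s^3)) (by positivity) (by field_simp; ring) (by linarith [mul_lt_mul_of_pos_left hcu (by positivity : (0:ℝ) < 4*s^2), hs0, pow_pos hs0 2, pow_pos hs0 3, pow_pos hs0 4])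
      have c23 : brk0 ℓ θ ≤ (x + s/(s+2)) - (((0:ℤ)):ℝ) := by
        rw [h0]; push_cast
        exact frle (D := (4*s^2*(s+2)^2)) (N := (4*s^2) * (x*(s+2)^2) + (-8*s^2 + 4*s^4)) (by positivity) (by field_simp; ring) (by linarith [mul_le_mul_of_nonneg_left hcl (by positivity : (0:ℝ) ≤ 4*s^2), hs0, pow_pos hs0 2, pow_pos hs0 3, pow_pos hs0 4])
      have e3 : Ftrap ℓ α θ (x + s/(s+2)) = 2/s*x + (s^2+2*s-2)/(s*(s+2)) := by
        rw [stepR ℓ α θ s hs0 hΛ h0 h1 (x + s/(s+2)) 0 c21 c22 c23]; push_cast; field_simp; try ring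
      have c31 : (((1:ℤ)):ℝ) ≤ (2/s*x + (s^2+2*s-2)/(s*(s+2))) - brk1 ℓ α θ := by
        rw [h1]; push_cast
        exact frle (D := (4*s^2*(s+2)^2)) (N := (8*s) * (x*(s+2)^2) + (-16*s)) (by positivity) (by field_simp; ring) (by linarith [mul_le_mul_of_nonneg_left hcl (by positivity : (0:ℝ) ≤ 8*s), hs0, pow_pos hs0 2, pow_pos hs0 3, pow_pos hs0 4])
      have c32 : (2/s*x + (s^2+2*s-2)/(s*(s+2))) - brk1 ℓ α θ < (((1:ℤ)):ℝ) + 1 := by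
        rw [h1]; push_cast
        exact frlt (D := (4*s^2*(s+2)^2)) (N := (-8*s) * (x*(s+2)^2) + (16*s + 16*s^2 + 16*s^3 + 4*s^4)) (by positivity) (by field_simp; ring) (by linarith [mul_lt_mul_of_pos_left hcu (by positivity : (0:ℝ) < 8*s), hs0, pow_pos hs0 2, pow_pos hs0 3, pow_pos hs0 4])
      have c33 : (2/s*x + (s^2+2*s-2)/(s*(s+2))) - (((1:ℤ)):ℝ) ≤ brk0 ℓ θ := by
        rw [h0]; push_cast
        exact frle (D := (4*s^2*(s+2)^2)) (N := (-8*s) * (x*(s+2)^2) + (16*s + 16*s^2 + 8*s^3)) (by positivity) (by field_simp; ring) (by linarith [mul_lt_mul_of_pos_left hcu (by positivity : (0:ℝ) < 8*s), hs0, pow_pos hs0 2, pow_pos hs0 3, pow_pos hs0 4])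
      have e4 : Ftrap ℓ α θ (2/s*x + (s^2+2*s-2)/(s*(s+2))) = x + 1 := by
        rw [stepL ℓ α θ s hs0 hΛ h1 (2/s*x + (s^2+2*s-2)/(s*(s+2))) 1 c31 c32 c33]; push_cast; field_simp; try ring
      simp only [Function.iterate_succ, Function.iterate_zero, Function.comp_apply, id_eq]
      rw [e1, e2, e3, e4]
    · rcases lt_or_ge x ((s^2+2*s+2)/(s+2)^2) with hC3 | hC3
      · -- Case 3 : a₀ ≤ x < c
        have hcl : 2*s+2 ≤ x*(s+2)^2 := by rw [div_le_iff₀ hA] at hC2; linarith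
        have hcu : x*(s+2)^2 < s^2+2*s+2 := by rw [lt_div_iff₀ hA] at hC3; linarith
        have c01 : (((0:ℤ)):ℝ) ≤ (x) - brk1 ℓ α θ := by
          rw [h1]; push_cast
          exact frle (D := (4*s^2*(s+2)^2)) (N := (4*s^2) * (x*(s+2)^2) + (8*s^2)) (by positivity) (by field_simp; ring) (by linarith [mul_le_mul_of_nonneg_left hcl (by positivity : (0:ℝ) ≤ 4*s^2), hs0, pow_pos hs0 2, pow_pos hs0 3, pow_pos hs0 4])
        have c02 : (x) - brk1 ℓ α θ < (((0:ℤ)):ℝ) + 1 := by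
          rw [h1]; push_cast
          exact frlt (D := (4*s^2*(s+2)^2)) (N := (-4*s^2) * (x*(s+2)^2) + (8*s^2 + 16*s^3 + 4*s^4)) (by positivity) (by field_simp; ring) (by linarith [mul_lt_mul_of_pos_left hcu (by positivity : (0:ℝ) < 4*s^2), hs0, pow_pos hs0 2, pow_pos hs0 3, pow_pos hs0 4])
        have c03 : brk0 ℓ θ ≤ (x) - (((0:ℤ)):ℝ) := by
          rw [h0]; push_cast
          exact frle (D := (4*s^2*(s+2)^2)) (N := (4*s^2) * (x*(s+2)^2) + (-8*s^2 - 8*s^3)) (by positivity) (by field_simp; ring) (by linarith [mul_le_mul_of_nonneg_left hcl (by positivity : (0:ℝ) ≤ 4*s^2), hs0, pow_pos hs0 2, pow_pos hs0 3, pow_pos hs0 4])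
        have e1 : Ftrap ℓ α θ (x) = 2/s*x + (s^2-2)/(s*(s+2)) := by
          rw [stepR ℓ α θ s hs0 hΛ h0 h1 (x) 0 c01 c02 c03]; push_cast; field_simp; try ring
        have c11 : (((0:ℤ)):ℝ) ≤ (2/s*x + (s^2-2)/(s*(s+2))) - brk1 ℓ α θ := by
          rw [h1]; push_cast
          exact frle (D := (4*s^2*(s+2)^2)) (N := (8*s) * (x*(s+2)^2) + (-16*s + 8*s^3 + 4*s^4)) (by positivity) (by field_simp; ring) (by linarith [mul_le_mul_of_nonneg_left hcl (by positivity : (0:ℝ) ≤ 8*s), hs0, pow_pos hs0 2, pow_pos hs0 3, pow_pos hs0 4])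
        have c12 : (2/s*x + (s^2-2)/(s*(s+2))) - brk1 ℓ α θ < (((0:ℤ)):ℝ) + 1 := by
          rw [h1]; push_cast
          exact frlt (D := (4*s^2*(s+2)^2)) (N := (-8*s) * (x*(s+2)^2) + (16*s + 16*s^2 + 8*s^3)) (by positivity) (by field_simp; ring) (by linarith [mul_lt_mul_of_pos_left hcu (by positivity : (0:ℝ) < 8*s), hs0, pow_pos hs0 2, pow_pos hs0 3, pow_pos hs0 4])
        have c13 : brk0 ℓ θ ≤ (2/s*x + (s^2-2)/(s*(s+2))) - (((0:ℤ)):ℝ) := by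
          rw [h0]; push_cast
          exact frle (D := (4*s^2*(s+2)^2)) (N := (8*s) * (x*(s+2)^2) + (-16*s - 16*s^2 + 4*s^4)) (by positivity) (by field_simp; ring) (by linarith [mul_le_mul_of_nonneg_left hcl (by positivity : (0:ℝ) ≤ 8*s), hs0, pow_pos hs0 2, pow_pos hs0 3, pow_pos hs0 4])
        have e2 : Ftrap ℓ α θ (2/s*x + (s^2-2)/(s*(s+2))) = 4/s^2*x + (s^2-2)/s^2 := by
          rw [stepR ℓ α θ s hs0 hΛ h0 h1 (2/s*x + (s^2-2)/(s*(s+2))) 0 c11 c12 c13]; push_cast; field_simp; try ring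
        have c21 : (((1:ℤ)):ℝ) ≤ (4/s^2*x + (s^2-2)/s^2) - brk1 ℓ α θ := by
          rw [h1]; push_cast
          exact frle (D := (4*s^2*(s+2)^2)) (N := (16) * (x*(s+2)^2) + (-32 - 32*s)) (by positivity) (by field_simp; ring) (by linarith [mul_le_mul_of_nonneg_left hcl (by positivity : (0:ℝ) ≤ 16), hs0, pow_pos hs0 2, pow_pos hs0 3, pow_pos hs0 4])
        have c22 : (4/s^2*x + (s^2-2)/s^2) - brk1 ℓ α θ < (((1:ℤ)):ℝ) + 1 := by
          rw [h1]; push_cast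
          exact frlt (D := (4*s^2*(s+2)^2)) (N := (-16) * (x*(s+2)^2) + (32 + 32*s + 16*s^2 + 16*s^3 + 4*s^4)) (by positivity) (by field_simp; ring) (by linarith [mul_lt_mul_of_pos_left hcu (by positivity : (0:ℝ) < 16), hs0, pow_pos hs0 2, pow_pos hs0 3, pow_pos hs0 4])
        have c23 : (4/s^2*x + (s^2-2)/s^2) - (((1:ℤ)):ℝ) ≤ brk0 ℓ θ := by
          rw [h0]; push_cast
          exact frle (D := (4*s^2*(s+2)^2)) (N := (-16) * (x*(s+2)^2) + (32 + 32*s + 16*s^2 + 8*s^3)) (by positivity) (by field_simp; ring) (by linarith [mul_lt_mul_of_pos_left hcu (by positivity : (0:ℝ) < 16), hs0, pow_pos hs0 2, pow_pos hs0 3, pow_pos hs0 4])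
        have e3 : Ftrap ℓ α θ (4/s^2*x + (s^2-2)/s^2) = 2/s*x - 2/(s*(s+2)) + 1 := by
          rw [stepL ℓ α θ s hs0 hΛ h1 (4/s^2*x + (s^2-2)/s^2) 1 c21 c22 c23]; push_cast; field_simp; try ring
        have c31 : (((1:ℤ)):ℝ) ≤ (2/s*x - 2/(s*(s+2)) + 1) - brk1 ℓ α θ := by
          rw [h1]; push_cast
          exact frle (D := (4*s^2*(s+2)^2)) (N := (8*s) * (x*(s+2)^2) + (-16*s)) (by positivity) (by field_simp; ring) (by linarith [mul_le_mul_of_nonneg_left hcl (by positivity : (0:ℝ) ≤ 8*s), hs0, pow_pos hs0 2, pow_pos hs0 3, pow_pos hs0 4])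
        have c32 : (2/s*x - 2/(s*(s+2)) + 1) - brk1 ℓ α θ < (((1:ℤ)):ℝ) + 1 := by
          rw [h1]; push_cast
          exact frlt (D := (4*s^2*(s+2)^2)) (N := (-8*s) * (x*(s+2)^2) + (16*s + 16*s^2 + 16*s^3 + 4*s^4)) (by positivity) (by field_simp; ring) (by linarith [mul_lt_mul_of_pos_left hcu (by positivity : (0:ℝ) < 8*s), hs0, pow_pos hs0 2, pow_pos hs0 3, pow_pos hs0 4])
        have c33 : (2/s*x - 2/(s*(s+2)) + 1) - (((1:ℤ)):ℝ) ≤ brk0 ℓ θ := by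
          rw [h0]; push_cast
          exact frle (D := (4*s^2*(s+2)^2)) (N := (-8*s) * (x*(s+2)^2) + (16*s + 16*s^2 + 8*s^3)) (by positivity) (by field_simp; ring) (by linarith [mul_lt_mul_of_pos_left hcu (by positivity : (0:ℝ) < 8*s), hs0, pow_pos hs0 2, pow_pos hs0 3, pow_pos hs0 4])
        have e4 : Ftrap ℓ α θ (2/s*x - 2/(s*(s+2)) + 1) = x + 1 := by
          rw [stepL ℓ α θ s hs0 hΛ h1 (2/s*x - 2/(s*(s+2)) + 1) 1 c31 c32 c33]; push_cast; field_simp; try ring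
        simp only [Function.iterate_succ, Function.iterate_zero, Function.comp_apply, id_eq]
        rw [e1, e2, e3, e4]
      · -- Case 4 : c ≤ x < a₁ + 1
        have hcl : s^2+2*s+2 ≤ x*(s+2)^2 := by rw [div_le_iff₀ hA] at hC3; linarith
        have c01 : (((0:ℤ)):ℝ) ≤ (x) - brk1 ℓ α θ := by
          rw [h1]; push_cast
          exact frle (D := (4*s^2*(s+2)^2)) (N := (4*s^2) * (x*(s+2)^2) + (8*s^2)) (by positivity) (by field_simp; ring) (by linarith [mul_le_mul_of_nonneg_left hcl (by positivity : (0:ℝ) ≤ 4*s^2), hs0, pow_pos hs0 2, pow_pos hs0 3, pow_pos hs0 4])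
        have c02 : (x) - brk1 ℓ α θ < (((0:ℤ)):ℝ) + 1 := by
          rw [h1]; push_cast
          exact frlt (D := (4*s^2*(s+2)^2)) (N := (-4*s^2) * (x*(s+2)^2) + (8*s^2 + 16*s^3 + 4*s^4)) (by positivity) (by field_simp; ring) (by linarith [mul_lt_mul_of_pos_left hg2 (by positivity : (0:ℝ) < 4*s^2), hs0, pow_pos hs0 2, pow_pos hs0 3, pow_pos hs0 4])
        have c03 : brk0 ℓ θ ≤ (x) - (((0:ℤ)):ℝ) := by
          rw [h0]; push_cast
          exact frle (D := (4*s^2*(s+2)^2)) (N := (4*s^2) * (x*(s+2)^2) + (-8*s^2 - 8*s^3)) (by positivity) (by field_simp; ring) (by linarith [mul_le_mul_of_nonneg_left hcl (by positivity : (0:ℝ) ≤ 4*s^2), hs0, pow_pos hs0 2, pow_pos hs0 3, pow_pos hs0 4])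
        have e1 : Ftrap ℓ α θ (x) = 2/s*x + (s^2-2)/(s*(s+2)) := by
          rw [stepR ℓ α θ s hs0 hΛ h0 h1 (x) 0 c01 c02 c03]; push_cast; field_simp; try ring
        have c11 : (((1:ℤ)):ℝ) ≤ (2/s*x + (s^2-2)/(s*(s+2))) - brk1 ℓ α θ := by
          rw [h1]; push_cast
          exact frle (D := (4*s^2*(s+2)^2)) (N := (8*s) * (x*(s+2)^2) + (-16*s - 16*s^2 - 8*s^3)) (by positivity) (by field_simp; ring) (by linarith [mul_le_mul_of_nonneg_left hcl (by positivity : (0:ℝ) ≤ 8*s), hs0, pow_pos hs0 2, pow_pos hs0 3, pow_pos hs0 4])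
        have c12 : (2/s*x + (s^2-2)/(s*(s+2))) - brk1 ℓ α θ < (((1:ℤ)):ℝ) + 1 := by
          rw [h1]; push_cast
          exact frlt (D := (4*s^2*(s+2)^2)) (N := (-8*s) * (x*(s+2)^2) + (16*s + 32*s^2 + 24*s^3 + 4*s^4)) (by positivity) (by field_simp; ring) (by linarith [mul_lt_mul_of_pos_left hg2 (by positivity : (0:ℝ) < 8*s), hs0, pow_pos hs0 2, pow_pos hs0 3, pow_pos hs0 4])
        have c13 : (2/s*x + (s^2-2)/(s*(s+2))) - (((1:ℤ)):ℝ) ≤ brk0 ℓ θ := by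
          rw [h0]; push_cast
          exact frle (D := (4*s^2*(s+2)^2)) (N := (-8*s) * (x*(s+2)^2) + (16*s + 32*s^2 + 16*s^3)) (by positivity) (by field_simp; ring) (by linarith [mul_lt_mul_of_pos_left hg2 (by positivity : (0:ℝ) < 8*s), hs0, pow_pos hs0 2, pow_pos hs0 3, pow_pos hs0 4])
        have e2 : Ftrap ℓ α θ (2/s*x + (s^2-2)/(s*(s+2))) = x + 2/(s+2) := by
          rw [stepL ℓ α θ s hs0 hΛ h1 (2/s*x + (s^2-2)/(s*(s+2))) 1 c11 c12 c13]; push_cast; field_simp; try ring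
        have c21 : (((1:ℤ)):ℝ) ≤ (x + 2/(s+2)) - brk1 ℓ α θ := by
          rw [h1]; push_cast
          exact frle (D := (4*s^2*(s+2)^2)) (N := (4*s^2) * (x*(s+2)^2) + (8*s^2 - 8*s^3 - 4*s^4)) (by positivity) (by field_simp; ring) (by linarith [mul_le_mul_of_nonneg_left hcl (by positivity : (0:ℝ) ≤ 4*s^2), hs0, pow_pos hs0 2, pow_pos hs0 3, pow_pos hs0 4])
        have c22 : (x + 2/(s+2)) - brk1 ℓ α θ < (((1:ℤ)):ℝ) + 1 := by
          rw [h1]; push_cast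
          exact frlt (D := (4*s^2*(s+2)^2)) (N := (-4*s^2) * (x*(s+2)^2) + (8*s^2 + 24*s^3 + 8*s^4)) (by positivity) (by field_simp; ring) (by linarith [mul_lt_mul_of_pos_left hg2 (by positivity : (0:ℝ) < 4*s^2), hs0, pow_pos hs0 2, pow_pos hs0 3, pow_pos hs0 4])
        have c23 : (x + 2/(s+2)) - (((1:ℤ)):ℝ) ≤ brk0 ℓ θ := by
          rw [h0]; push_cast
          exact frle (D := (4*s^2*(s+2)^2)) (N := (-4*s^2) * (x*(s+2)^2) + (8*s^2 + 16*s^3 + 4*s^4)) (by positivity) (by field_simp; ring) (by linarith [mul_lt_mul_of_pos_left hg2 (by positivity : (0:ℝ) < 4*s^2), hs0, pow_pos hs0 2, pow_pos hs0 3, pow_pos hs0 4])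
        have e3 : Ftrap ℓ α θ (x + 2/(s+2)) = s/2*x + (2-s^2)/(2*(s+2)) + 1 := by
          rw [stepL ℓ α θ s hs0 hΛ h1 (x + 2/(s+2)) 1 c21 c22 c23]; push_cast; field_simp; try ring
        have c31 : (((1:ℤ)):ℝ) ≤ (s/2*x + (2-s^2)/(2*(s+2)) + 1) - brk1 ℓ α θ := by
          rw [h1]; push_cast
          exact frle (D := (4*s^2*(s+2)^2)) (N := (2*s^3) * (x*(s+2)^2) + (16*s^2 + 4*s^3 - 4*s^4 - 2*s^5)) (by positivity) (by field_simp; ring) (by linarith [mul_le_mul_of_nonneg_left hcl (by positivity : (0:ℝ) ≤ 2*s^3), hs0, pow_pos hs0 2, pow_pos hs0 3, pow_pos hs0 4])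
        have c32 : (s/2*x + (2-s^2)/(2*(s+2)) + 1) - brk1 ℓ α θ < (((1:ℤ)):ℝ) + 1 := by
          rw [h1]; push_cast
          exact frlt (D := (4*s^2*(s+2)^2)) (N := (-2*s^3) * (x*(s+2)^2) + (12*s^3 + 8*s^4 + 2*s^5)) (by positivity) (by field_simp; ring) (by linarith [mul_lt_mul_of_pos_left hg2 (by positivity : (0:ℝ) < 2*s^3), hs0, pow_pos hs0 2, pow_pos hs0 3, pow_pos hs0 4])
        have c33 : brk0 ℓ θ ≤ (s/2*x + (2-s^2)/(2*(s+2)) + 1) - (((1:ℤ)):ℝ) := by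
          rw [h0]; push_cast
          exact frle (D := (4*s^2*(s+2)^2)) (N := (2*s^3) * (x*(s+2)^2) + (-4*s^3 - 4*s^4 - 2*s^5)) (by positivity) (by field_simp; ring) (by linarith [mul_le_mul_of_nonneg_left hcl (by positivity : (0:ℝ) ≤ 2*s^3), hs0, pow_pos hs0 2, pow_pos hs0 3, pow_pos hs0 4])
        have e4 : Ftrap ℓ α θ (s/2*x + (2-s^2)/(2*(s+2)) + 1) = x + 1 := by
          rw [stepR ℓ α θ s hs0 hΛ h0 h1 (s/2*x + (2-s^2)/(2*(s+2)) + 1) 1 c31 c32 c33]; push_cast; field_simp; try ring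
        simp only [Function.iterate_succ, Function.iterate_zero, Function.comp_apply, id_eq]
        rw [e1, e2, e3, e4]


private lemma Ftrap_add_int (ℓ α θ x : ℝ) (m : ℤ) :
    Ftrap ℓ α θ (x + m) = Ftrap ℓ α θ x + m := by
  unfold Ftrap
  have h1 : x + (m:ℝ) - brk1 ℓ α θ = (x - brk1 ℓ α θ) + m := by ring
  rw [h1, Int.floor_add_intCast]
  have h2 : x + (m:ℝ) - ((⌊x - brk1 ℓ α θ⌋ + m : ℤ) : ℝ) = x - (⌊x - brk1 ℓ α θ⌋ : ℝ) := by
    push_cast; ring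
  rw [h2]
  push_cast
  ring

private lemma Ftrap_iter_add_int (ℓ α θ : ℝ) (j : ℕ) (x : ℝ) (m : ℤ) :
    (Ftrap ℓ α θ)^[j] (x + m) = (Ftrap ℓ α θ)^[j] x + m := by
  induction j generalizing x with
  | zero => simp
  | succ n ih =>
    rw [Function.iterate_succ_apply, Function.iterate_succ_apply, Ftrap_add_int, ih]

set_option maxHeartbeats 1000000 in
/-- on the curve τ = d + 3 + 2√(2+2d) in the (d,τ)-plane, with
ℓ = 1+d, α = arctan(2(1−d)), θ = arctan(2τ), all points of the circle are
4-periodic: F⁴ = · + 1, and ρ(F) = 1/4 (a degenerate Arnol'd tongue). -/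
theorem stmt18 (d : ℝ) (hd : d ∈ Set.Ioo (-1 : ℝ) 1)
    (τ ℓ α θ : ℝ) (hτ : τ = d + 3 + 2 * Real.sqrt (2 + 2 * d))
    (hℓ : ℓ = 1 + d) (hα : α = Real.arctan (2 * (1 - d)))
    (hθ : θ = Real.arctan (2 * τ)) :
    Real.tan θ > 2 * ℓ + Real.tan α ∧
    (∀ x : ℝ, (Ftrap ℓ α θ)^[4] x = x + 1) ∧
    rotationNumber (Ftrap ℓ α θ) = 1 / 4 := by
  obtain ⟨hd1, hd2⟩ := hd
  set s : ℝ := Real.sqrt (2 + 2*d) with hs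
  have h2d : (0:ℝ) < 2 + 2*d := by linarith
  have hs0 : 0 < s := Real.sqrt_pos.mpr h2d
  have hssq : s^2 = 2 + 2*d := Real.sq_sqrt h2d.le
  have hs2 : s < 2 := by nlinarith [hssq]
  have hs2' : (0:ℝ) < s + 2 := by linarith
  have hτs : τ = (s+2)^2/2 := by
    rw [hτ]
    have : Real.sqrt (2 + 2*d) = s := rfl
    rw [show (2:ℝ) + 2*d = 2+2*d by ring] at this
    nlinarith [hssq]
  have htθ : Real.tan θ = (s+2)^2 := by
    rw [hθ, Real.tan_arctan, hτs]; ring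
  have htα : Real.tan α = 4 - s^2 := by
    rw [hα, Real.tan_arctan]; nlinarith [hssq]
  have hcθ : 0 < Real.cos θ := by rw [hθ, Real.cos_arctan]; positivity
  have hcα : 0 < Real.cos α := by rw [hα, Real.cos_arctan]; positivity
  have hsinθ : Real.sin θ = Real.tan θ * Real.cos θ := by
    rw [Real.tan_eq_sin_div_cos]; field_simp
  have hsinα : Real.sin α = Real.tan α * Real.cos α := by
    rw [Real.tan_eq_sin_div_cos]; field_simp
  -- the three parameter values
  have hΛ : Lam α θ = 2/s := by
    unfold Lam
    rw [Real.sin_add, Real.sin_sub, hsinθ, hsinα, htθ, htα]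
    rw [div_eq_div_iff]
    · ring
    · nlinarith [mul_pos hcθ hcα, mul_pos (mul_pos hcθ hcα) (mul_pos hs0 hs0),
        mul_pos (mul_pos hcθ hcα) hs0]
    · exact hs0.ne'
  have h0 : brk0 ℓ θ = (2*s+2)/(s+2)^2 := by
    unfold brk0
    rw [htθ, hℓ, div_eq_div_iff (by positivity) (by positivity)]
    nlinarith [hssq]
  have h1 : brk1 ℓ α θ = -2/(s+2)^2 := by
    unfold brk1
    rw [htθ, htα, hℓ, div_eq_div_iff (by positivity) (by positivity)]
    nlinarith [hssq]
  -- part 1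
  have part1 : Real.tan θ > 2 * ℓ + Real.tan α := by
    rw [htθ, htα, hℓ]; nlinarith [hssq, hs0]
  -- part 2
  have part2 : ∀ x : ℝ, (Ftrap ℓ α θ)^[4] x = x + 1 := by
    intro x
    set n : ℤ := ⌊x - brk1 ℓ α θ⌋ with hn
    have hy1 : brk1 ℓ α θ ≤ x - n := by
      have := Int.floor_le (x - brk1 ℓ α θ)
      rw [← hn] at this; linarith
    have hy2 : x - n < brk1 ℓ α θ + 1 := by
      have := Int.lt_floor_add_one (x - brk1 ℓ α θ)
      rw [← hn] at this; linarith
    have h4 := four_step ℓ α θ s (x - n) hs0 hs2 hΛ h0 h1 hy1 hy2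
    have := Ftrap_iter_add_int ℓ α θ 4 (x - n) n
    rw [show x - (n:ℝ) + (n:ℝ) = x by ring, h4] at this
    rw [this]; ring
  refine ⟨part1, part2, ?_⟩
  -- part 3 : rotation number
  have hq : ∀ q : ℕ, (Ftrap ℓ α θ)^[4*q] 0 = q := by
    intro q
    induction q with
    | zero => simp
    | succ m ih =>
      have : 4*(m+1) = 4 + 4*m := by ring
      rw [this, Function.iterate_add_apply, ih, part2]
      push_cast; ring
  have hiter : ∀ n : ℕ, (Ftrap ℓ α θ)^[n] 0 = (Ftrap ℓ α θ)^[n % 4] 0 + (n / 4 : ℕ) := by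
    intro n
    conv_lhs => rw [show n = n % 4 + 4 * (n / 4) by omega]
    rw [Function.iterate_add_apply, hq]
    have h5 := Ftrap_iter_add_int ℓ α θ (n % 4) 0 ((n / 4 : ℕ) : ℤ)
    simp only [Int.cast_natCast, zero_add] at h5
    exact h5
  set C : ℝ := |(Ftrap ℓ α θ)^[0] 0| + |(Ftrap ℓ α θ)^[1] 0| + |(Ftrap ℓ α θ)^[2] 0| +
    |(Ftrap ℓ α θ)^[3] 0| with hC
  have hCr : ∀ n : ℕ, |(Ftrap ℓ α θ)^[n % 4] 0| ≤ C := by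
    intro n
    have a0 := abs_nonneg ((Ftrap ℓ α θ)^[0] 0)
    have a1 := abs_nonneg ((Ftrap ℓ α θ)^[1] 0)
    have a2 := abs_nonneg ((Ftrap ℓ α θ)^[2] 0)
    have a3 := abs_nonneg ((Ftrap ℓ α θ)^[3] 0)
    have h4 : n % 4 = 0 ∨ n % 4 = 1 ∨ n % 4 = 2 ∨ n % 4 = 3 := by omega
    rcases h4 with h|h|h|h <;> rw [h, hC] <;> linarith
  have htend : Tendsto (fun n : ℕ => (Ftrap ℓ α θ)^[n] 0 / (n : ℝ)) atTop (nhds (1/4)) := by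
    rw [← tendsto_sub_nhds_zero_iff]
    refine squeeze_zero_norm' (a := fun n : ℕ => (C + 1) / (n : ℝ)) ?_ ?_
    · filter_upwards [eventually_ge_atTop 1] with n hn
      have hnpos : (0:ℝ) < (n:ℝ) := by exact_mod_cast hn
      have hne : (n:ℝ) ≠ 0 := hnpos.ne'
      have hdecomp := hiter n
      have hdm : 4 * (n / 4) + n % 4 = n := Nat.div_add_mod n 4
      have hdm' : (4:ℝ) * ((n / 4 : ℕ) : ℝ) + ((n % 4 : ℕ) : ℝ) = (n:ℝ) := by
        exact_mod_cast congrArg (fun m : ℕ => (m : ℝ)) hdm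
      have hmod : ((n / 4 : ℕ) : ℝ) = ((n:ℝ) - ((n % 4 : ℕ) : ℝ)) / 4 := by
        rw [eq_div_iff (by norm_num : (4:ℝ) ≠ 0)]; linarith
      have hr4 : ((n % 4 : ℕ) : ℝ) ≤ 3 := by
        have h4 : n % 4 ≤ 3 := by omega
        exact_mod_cast h4
      have habs := hCr n
      have key : (Ftrap ℓ α θ)^[n] 0 / (n:ℝ) - 1/4
          = ((Ftrap ℓ α θ)^[n % 4] 0 - ((n % 4 : ℕ) : ℝ)/4) / (n:ℝ) := by
        rw [hdecomp, hmod]; field_simp; ring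
      rw [Real.norm_eq_abs, key, abs_div, abs_of_pos hnpos]
      have tri : |(Ftrap ℓ α θ)^[n % 4] 0 - ((n % 4 : ℕ) : ℝ)/4|
          ≤ |(Ftrap ℓ α θ)^[n % 4] 0| + |((n % 4 : ℕ) : ℝ)/4| := by
        have h := abs_add_le ((Ftrap ℓ α θ)^[n % 4] 0) (-(((n % 4 : ℕ) : ℝ)/4))
        simpa [sub_eq_add_neg, abs_neg] using h
      have hsm : |((n % 4 : ℕ) : ℝ)/4| ≤ 3/4 := by
        rw [abs_of_nonneg (by positivity)]; linarith
      gcongr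
      linarith
    · exact tendsto_const_div_atTop_nhds_zero_nat (C + 1)
  unfold rotationNumber
  exact htend.limUnder_eq
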